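/- arXiv:math/0107054 — 2 statements merged into one kernel-verified Lean document; each statement's English description precedes it below -/
import Mathlib

section
/- The limits χ^{(∞)}_{k,l;b}(q,z) = lim_{N→∞} χ^{(N)}_{k,l;b}(q,z) exist as formal power series in q, z, and the family (χ^{(∞)}_{k,l;b})_b is the unique family of formal power series in q, z satisfying the difference equations χ^{(∞)}_{k,l;(b_0,...,b_{l-2})}(q,z) = Σ_{i=0}^{b_0} z^i · χ^{(∞)}_{k,l;(b_1−i, b_2−i, ..., b_{l-2}−i, k−i)}(q, qz) for all admissible boundary vectors b, together with the initial condition χ^{(∞)}_{k,l;b}(q,0) = 1 for all b. -/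
open Finset Filter MvPowerSeries

noncomputable section

/-- Formal power series in two variables `q` (index 0) and `z` (index 1). -/
abbrev PS : Type := MvPowerSeries (Fin 2) ℂ

/-- The variable `q`. -/
def Qv : PS := MvPowerSeries.X 0
/-- The variable `z`. -/
def Zv : PS := MvPowerSeries.X 1

/-- Build a power series from its coefficient function. -/
def ofCoeff (c : (Fin 2 →₀ ℕ) → ℂ) : PS := c

/-- The exponent `q^a z^c`. -/
def idx2 (a c : ℕ) : Fin 2 →₀ ℕ := Finsupp.single 0 a + Finsupp.single 1 c

/-- The q-shift operator `(S g)(q,z) = g(q,qz)`. -/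
def Sop (f : PS) : PS :=
  ofCoeff fun e => if e 1 ≤ e 0 then MvPowerSeries.coeff (idx2 (e 0 - e 1) (e 1)) f else 0

/-- The window condition for `(k,l)`-configurations: `x_j + ... + x_{j+l-1} ≤ k`. -/
def windowOK (k l : ℕ) (x : ℕ → ℕ) : Prop := ∀ j, ∑ t ∈ Finset.range l, x (j + t) ≤ k

/-- The boundary condition: `x_0 + ... + x_i ≤ b_i` for `0 ≤ i ≤ l-2`. -/
def boundOK (l : ℕ) (b : ℕ → ℕ) (x : ℕ → ℕ) : Prop :=
  ∀ i, i < l - 1 → ∑ t ∈ Finset.range (i + 1), x t ≤ b i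

/-- Admissible boundary vectors: `b_0 ≤ b_1 ≤ ... ≤ b_{l-2} ≤ k`. -/
def AdmB (k l : ℕ) (b : ℕ → ℕ) : Prop :=
  (∀ i j, i ≤ j → j < l - 1 → b i ≤ b j) ∧ ∀ i, i < l - 1 → b i ≤ k

/-- The character `χ^{(N)}_{k,l;b}(q,z)`: the coefficient of `q^a z^m` counts
`(k,l)`-configurations of length at most `N` obeying the boundary conditions,
with `Σ j·x_j = a` and `Σ x_j = m`. -/
def chiN (k l N : ℕ) (b : ℕ → ℕ) : PS :=
  ofCoeff fun e => (Nat.card {x : ℕ → ℕ //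
    windowOK k l x ∧ boundOK l b x ∧ (∀ i, N ≤ i → x i = 0) ∧
    ∑ j ∈ Finset.range N, j * x j = e 0 ∧ ∑ j ∈ Finset.range N, x j = e 1} : ℂ)

/-- The limit character `χ^{(∞)}_{k,l;b}(q,z)`. -/
def chiInf (k l : ℕ) (b : ℕ → ℕ) : PS :=
  ofCoeff fun e => (Nat.card {x : ℕ → ℕ //
    windowOK k l x ∧ boundOK l b x ∧ (∀ i, e 0 + 1 ≤ i → x i = 0) ∧
    ∑ j ∈ Finset.range (e 0 + 1), j * x j = e 0 ∧
    ∑ j ∈ Finset.range (e 0 + 1), x j = e 1} : ℂ)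

/-- The shifted boundary vector `(b_1 - i, ..., b_{l-2} - i, k - i)`. -/
def shiftB (k l : ℕ) (b : ℕ → ℕ) (i : ℕ) : ℕ → ℕ :=
  fun j => if j + 1 ≤ l - 2 then b (j + 1) - i else k - i

/-- The monomial `q^{p.1} z^{p.2}`. -/
def monoPS (p : ℕ × ℕ) : PS := Qv ^ p.1 * Zv ^ p.2

/-- Exponents in the bracket `[P_1,...,P_l] = P_1^{b_0} P_2^{b_1-b_0} ⋯ P_l^{k-b_{l-2}}`. -/
def bexp (l k : ℕ) (b : ℕ → ℕ) (i : ℕ) : ℕ :=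
  if i = 0 then b 0 else if i = l - 1 then k - b (l - 2) else b i - b (i - 1)

/-- The bracket `[P_1,...,P_l]` as a function of the boundary vector `b`. -/
def bracket (l k : ℕ) (P : ℕ → ℕ × ℕ) (b : ℕ → ℕ) : PS :=
  ∏ i ∈ Finset.range l, monoPS (P i) ^ bexp l k b i

/-- q-exponent pattern of the tuples in the list defining `V_l`
(`r` of the entries carry a factor `z`; `c 0 = 0`). -/
def patQ (l r : ℕ) (c : ℕ → ℕ) (j : ℕ) : ℕ := if j < r then c (l - r + j) else c (j - r)

/-- z-exponent pattern of the tuples in the list defining `V_l`. -/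
def patZ (r j : ℕ) : ℕ := if j < r then 1 else 0

/-- The tuples `(P_1,...,P_l)` appearing in the definition of `V_l`, namely
`q^{mk} z^{nk}[q^{c_{l-r}}z, …, q^{c_{l-1}}z, 1, q^{c_1}, …, q^{c_{l-1-r}}]`
with the common factor `q^m z^n` distributed over the entries. -/
def SimpleTuple (l : ℕ) (P : ℕ → ℕ × ℕ) : Prop :=
  ∃ m n r : ℕ, r < l ∧ ∃ c : ℕ → ℕ, c 0 = 0 ∧ Monotone c ∧
    ∀ j, j < l → P j = (m + patQ l r c j, n + patZ r j)

/-- Admissible boundary data. -/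
def Adm (k l : ℕ) : Type := {b : ℕ → ℕ // AdmB k l b}

/-- The ambient space of functions of `b` with values in power series; `V_l` is a
subspace of it. -/
abbrev VV (k l : ℕ) : Type := Adm k l → PS

/-- The simple vector `f(q,z)·[P_1,...,P_l]`. -/
def simpleVal (k l : ℕ) (f : PS) (P : ℕ → ℕ × ℕ) : VV k l := fun b => f * bracket l k P b.val

/-- The space `V_l`, spanned by simple vectors. -/
def Vspan (k l : ℕ) : Submodule ℂ (VV k l) :=
  Submodule.span ℂ {v | ∃ f P, SimpleTuple l P ∧ v = simpleVal k l f P}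

/-- Power series expansion of `1/(1 - q^{w.1} z^{w.2})` where `w` may have negative
exponents, in which case `1/(1-u) = -Σ_{n≥1} u^{-n}` is used. -/
def geomPS : ℤ × ℤ → PS := fun w =>
  if 0 ≤ w.1 ∧ 0 ≤ w.2 then
    ofCoeff fun e => ({n : ℕ | (n : ℤ) * w.1 = (e 0 : ℤ) ∧ (n : ℤ) * w.2 = (e 1 : ℤ)}.ncard : ℂ)
  else
    ofCoeff fun e =>
      -({n : ℕ | 0 < n ∧ (n : ℤ) * w.1 = -(e 0 : ℤ) ∧ (n : ℤ) * w.2 = -(e 1 : ℤ)}.ncard : ℂ)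

/-- Exponents of `S(q^{-1} z P_l / P_1)`. -/
def wExpA (l : ℕ) (P : ℕ → ℕ × ℕ) : ℤ × ℤ :=
  (((P (l-1)).1 : ℤ) + ((P (l-1)).2 : ℤ) - ((P 0).1 : ℤ) - ((P 0).2 : ℤ),
   ((P (l-1)).2 : ℤ) + 1 - ((P 0).2 : ℤ))

/-- The q-shift of a monomial: `S(q^e z^d) = q^{e+d} z^d`. -/
def Smono (p : ℕ × ℕ) : ℕ × ℕ := (p.1 + p.2, p.2)

/-- The tuple `(S P_1, S P_1, S P_2, ..., S P_{l-1})` produced by the operator `A`. -/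
def tupA (P : ℕ → ℕ × ℕ) : ℕ → ℕ × ℕ := fun j => if j = 0 then Smono (P 0) else Smono (P (j - 1))

/-- The tuple `(S(q^{-1} z P_l), S P_1, ..., S P_{l-1})` produced by the operator `B`. -/
def tupB (l : ℕ) (P : ℕ → ℕ × ℕ) : ℕ → ℕ × ℕ :=
  fun j => if j = 0 then ((P (l-1)).1 + (P (l-1)).2, (P (l-1)).2 + 1) else Smono (P (j - 1))

/-- Defining property of the operator `A`:
`A(f[P_1,…,P_l]) = S(f/(1 - q^{-1}zP_l/P_1)·[P_1,P_1,P_2,…,P_{l-1}])`. -/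
def HypA (k l : ℕ) (A : Module.End ℂ (VV k l)) : Prop :=
  ∀ f P, SimpleTuple l P →
    A (simpleVal k l f P) = simpleVal k l (Sop f * geomPS (wExpA l P)) (tupA P)

/-- Defining property of the operator `B`:
`B(f[P_1,…,P_l]) = S(f/(1 - q z^{-1}P_1/P_l)·[q^{-1}zP_l,P_1,…,P_{l-1}])`. -/
def HypB (k l : ℕ) (B : Module.End ℂ (VV k l)) : Prop :=
  ∀ f P, SimpleTuple l P →
    B (simpleVal k l f P) =
      simpleVal k l (Sop f * geomPS (-(wExpA l P).1, -(wExpA l P).2)) (tupB l P)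

/-- The vector `v_ini = [1,...,1]`. -/
def vini (k l : ℕ) : VV k l := simpleVal k l 1 (fun _ => (0, 0))

/-- `(z)_n = Π_{i=0}^{n-1} (1 - q^i z)`. -/
def pochZ (n : ℕ) : PS := ∏ i ∈ Finset.range n, (1 - Qv ^ i * Zv)
/-- `(q)_t = Π_{i=1}^{t} (1 - q^i)`. -/
def pochQ (t : ℕ) : PS := ∏ i ∈ Finset.range t, (1 - Qv ^ (i + 1))
/-- `(q^t z)_∞ = Π_{i≥0} (1 - q^{t+i} z)`, defined coefficientwise. -/
def pochInfQZ (t : ℕ) : PS :=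
  ofCoeff fun e =>
    MvPowerSeries.coeff e (∏ i ∈ Finset.range (e 0 + 1), (1 - Qv ^ (t + i) * Zv))
/-- `(z)_∞ = Π_{i≥0} (1 - q^i z)`. -/
def pochInfZ : PS := pochInfQZ 0

/-- The vector `v_∞ = [1,...,1]/(z)_∞`. -/
def vinf (k l : ℕ) : VV k l := simpleVal k l pochInfZ⁻¹ (fun _ => (0, 0))

/-- Application of a monomial (word) in the operators `A` (letter `true`) and
`B` (letter `false`) to a vector; the leftmost letter acts last read, i.e.
`C_1 C_2 ⋯ C_m v = C_1 (C_2 (⋯ (C_m v)))`. -/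
def wact (k l : ℕ) (A B : Module.End ℂ (VV k l)) (w : List Bool) (v : VV k l) : VV k l :=
  w.foldr (fun c u => if c then A u else B u) v

/-- A good monomial: `C_i = A` implies `C_{i+l-1} = A` (letters 0-indexed, `true = A`). -/
def GoodWord (l : ℕ) (w : List Bool) : Prop :=
  ∀ i, i + (l - 1) < w.length → w.getD i true = true → w.getD (i + (l - 1)) true = true

/-- Canonical representative of an equivalence class of monomials: no trailing `A`s. -/
def Reduced (w : List Bool) : Prop := w = [] ∨ w.getLast? = some false

/-- Symbols for marked vertices: `•`, `∘`, `×`. -/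
inductive MSym : Type
  | dot | circ | mark
  deriving DecidableEq

/-- The `A`-arrow on (possibly marked) vertices. -/
def stepA : List MSym → List MSym
  | MSym.circ :: J => J ++ [MSym.circ]
  | MSym.dot :: _ :: J => MSym.dot :: (J ++ [MSym.circ])
  | MSym.mark :: MSym.dot :: J => MSym.dot :: (J ++ [MSym.circ])
  | MSym.mark :: MSym.circ :: J => MSym.mark :: (J ++ [MSym.circ])
  | MSym.mark :: MSym.mark :: J => MSym.dot :: (J ++ [MSym.circ])
  | v => v

/-- The `B`-arrow on (possibly marked) vertices: rotation. -/
def stepB : List MSym → List MSym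
  | [] => []
  | x :: J => J ++ [x]

/-- The marked path of the monomial `w` (extended by `A`s at positions beyond its
length), starting from `[•,…,•,×]`; `mstate l w t` is the vertex after `t` arrows. -/
def mstate (l : ℕ) (w : List Bool) : ℕ → List MSym
  | 0 => List.replicate (l - 1) MSym.dot ++ [MSym.mark]
  | t + 1 => (if w.getD t true then stepA else stepB) (mstate l w t)

/-- The `t`-th vertex of the marked path has the form `[× • J]`, i.e. the `t`-th
arrow is of type (i) or (ii). -/
def CSrc (l : ℕ) (w : List Bool) (t : ℕ) : Prop :=
  (mstate l w t).getD 0 MSym.circ = MSym.mark ∧ (mstate l w t).getD 1 MSym.circ = MSym.dot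

/-- `(N A K, N B K)` is a cancellation pair: `N A K` is good and the displayed `A`
is its cancellation `A`-arrow (the last arrow of type (i) or (ii)). -/
def CancelPair (l : ℕ) (N K : List Bool) : Prop :=
  GoodWord l (N ++ true :: K) ∧ CSrc l (N ++ true :: K) N.length ∧
    ∀ t, N.length < t → ¬ CSrc l (N ++ true :: K) t

/-- `w` is good and has a cancellation `A`-arrow. -/
def HasCA (l : ℕ) (w : List Bool) : Prop :=
  GoodWord l w ∧ ∃ t, w.getD t true = true ∧ CSrc l w t ∧ ∀ t', t < t' → ¬ CSrc l w t'

/-- `w` is good and has a cancellation `B`-arrow. -/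
def HasCB (l : ℕ) (w : List Bool) : Prop :=
  GoodWord l w ∧ ∃ t, w.getD t true = false ∧ CSrc l w t ∧ ∀ t', t < t' → ¬ CSrc l w t'

/-- The index of the cancellation arrow. -/
def cancelIdx (l : ℕ) (w : List Bool) : ℕ :=
  sInf {t | CSrc l w t ∧ ∀ t', t < t' → ¬ CSrc l w t'}

/-- Flip the letter at the cancellation arrow. -/
def flipCancel (l : ℕ) (w : List Bool) : List Bool :=
  (w ++ List.replicate (cancelIdx l w + 1 - w.length) true).set (cancelIdx l w) false

/-- The lattice `Λ` is `ℕ → ℤ` supported on `{0,…,l-1}`; coordinates `0,…,l-2`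
are the generators `b_0,…,b_{l-2}` and coordinate `l-1` is the generator `k`.
`Ma` is the map `M_a`: `b_i ↦ b_{i+1}` (`i ≤ l-3`), `b_{l-2} ↦ k`, `k ↦ k`. -/
def Ma (l : ℕ) (v : ℕ → ℤ) : ℕ → ℤ := fun j =>
  if j = 0 then 0
  else if j = l - 1 then v (l - 2) + v (l - 1)
  else if j < l - 1 then v (j - 1)
  else 0

/-- The map `M_b`: `b_i ↦ b_{i+1} - b_0` (`i ≤ l-3`), `b_{l-2} ↦ k - b_0`, `k ↦ k`. -/
def Mb (l : ℕ) (v : ℕ → ℤ) : ℕ → ℤ := fun j =>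
  if j = 0 then -(∑ i ∈ Finset.range (l - 1), v i)
  else if j = l - 1 then v (l - 2) + v (l - 1)
  else if j < l - 1 then v (j - 1)
  else 0

/-- The representative `ī ∈ {1,…,l}` of `i` modulo `l`. -/
def ibar (l : ℕ) (i : ℤ) : ℕ := ((i - 1) % (l : ℤ)).toNat + 1

/-- `ι_{i,j} = b_{ī-2} - b_{j̄-2} + k·δ(ī ≤ j̄)` (with `b_{-1} = 0`). -/
def iotaL (l : ℕ) (i j : ℤ) : ℕ → ℤ := fun t =>
  (if 2 ≤ ibar l i ∧ t = ibar l i - 2 then 1 else 0)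
  - (if 2 ≤ ibar l j ∧ t = ibar l j - 2 then 1 else 0)
  + (if ibar l i ≤ ibar l j ∧ t = l - 1 then 1 else 0)

/-- `M_{c_1} ∘ ⋯ ∘ M_{c_m}` applied to `v`, where `c_i = a` if the `i`-th letter is
`A` (`true`) and `c_i = b` otherwise. -/
def applyWord (l : ℕ) (w : List Bool) (v : ℕ → ℤ) : ℕ → ℤ :=
  w.foldr (fun c u => if c then Ma l u else Mb l u) v

/-- The extremal configuration of the monomial `w`:
`x_i = 0` if `C_{i+1} = A` and `x_i = M_{c_1} ∘ ⋯ ∘ M_{c_i}(b_0)` if `C_{i+1} = B`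
(entries beyond the length of `w` are `0`, matching equivalence of configurations). -/
def xconf (l : ℕ) (w : List Bool) (i : ℕ) : ℕ → ℤ :=
  if w.getD i true = true then 0 else applyWord l (w.take i) (iotaL l 2 1)

/-- The `A`-arrow of the summation graph (vertices as arrays of `•` = `true`,
`∘` = `false`). -/
def vstepA : List Bool → List Bool
  | false :: J => J ++ [false]
  | true :: _ :: J => true :: (J ++ [false])
  | v => v

/-- The `B`-arrow of the summation graph: rotation. -/
def vstepB : List Bool → List Bool
  | [] => []
  | x :: J => J ++ [x]

/-- The path associated with `w` in the summation graph, starting from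
`I_top = [•,…,•]`; `vstate l w t` is the vertex `I^{(t)}`. -/
def vstate (l : ℕ) (w : List Bool) (t : ℕ) : List Bool :=
  (w.take t).foldl (fun v c => if c then vstepA v else vstepB v) (List.replicate l true)

/-- The evolution of the vector part of a simple vector under one operator. -/
def tupStep (l : ℕ) (c : Bool) (P : ℕ → ℕ × ℕ) : ℕ → ℕ × ℕ :=
  if c then tupA P else tupB l P

/-- The vector part of `M v_∞` for a word `M`. -/
def wordTuple (l : ℕ) : List Bool → ℕ → ℕ × ℕ
  | [] => fun _ => (0, 0)
  | c :: w => tupStep l c (wordTuple l w)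

/-- The scalar part of `M v_∞` for a word `M`. -/
def wordScalar (l : ℕ) : List Bool → PS
  | [] => pochInfZ⁻¹
  | c :: w =>
      Sop (wordScalar l w) *
        (if c then geomPS (wExpA l (wordTuple l w))
         else geomPS (-(wExpA l (wordTuple l w)).1, -(wExpA l (wordTuple l w)).2))

/-- A cancellation block `𝔹_s = C_1 ⋯ C_{l+s}` with `C_1 = C_{s+2} = C_l = B`,
`C_2 = ⋯ = C_{s+1} = A`, `C_{l+1} = ⋯ = C_{l+s} = A` (0-indexed positions). -/
def IsBlock (l s : ℕ) (w : List Bool) : Prop :=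
  s ≤ l - 2 ∧ w.length = l + s ∧
  w.getD 0 true = false ∧ w.getD (s + 1) true = false ∧ w.getD (l - 1) true = false ∧
  (∀ i, 1 ≤ i → i ≤ s → w.getD i true = true) ∧
  (∀ i, l ≤ i → i < l + s → w.getD i true = true)

/-- The block `𝔼_i = C_2 ⋯ C_l` where `C_j = B` iff `j ∈ {σ(1),…,σ(i)}`
(1-based values of the permutation; `true = A`, `false = B`). -/
def Eblock (l : ℕ) (σ : Equiv.Perm (Fin l)) (i : ℕ) : List Bool :=
  (List.range (l - 1)).map fun t => decide (∀ a : Fin l, (a : ℕ) < i → (σ a : ℕ) ≠ t + 1)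

/-- The word `𝔼_{l-2}^{n_{l-2}} ⋯ 𝔼_1^{n_1}`. -/
def coreWord (l : ℕ) (σ : Equiv.Perm (Fin l)) (n : ℕ → ℤ) : List Bool :=
  (((List.range (l - 2)).reverse.map fun i' =>
    (List.replicate (n (i' + 1)).toNat (Eblock l σ (i' + 1))).flatten)).flatten

/-- The word `B^{n_{l-1}} 𝔼_{l-2}^{n_{l-2}} ⋯ 𝔼_1^{n_1}`; for `n_{l-1} < 0` the
first `-n_{l-1}` letters (which are `B`s) are removed instead. -/
def theWord (l : ℕ) (σ : Equiv.Perm (Fin l)) (n : ℕ → ℤ) : List Bool :=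
  if 0 ≤ n (l - 1) then List.replicate (n (l - 1)).toNat false ++ coreWord l σ n
  else (coreWord l σ n).drop (-(n (l - 1))).toNat

/-- `σ(1) = l` and `σ(l) = 1` (in 1-based notation). -/
def SigmaCond (l : ℕ) (σ : Equiv.Perm (Fin l)) : Prop :=
  (∀ a : Fin l, (a : ℕ) = 0 → (σ a : ℕ) = l - 1) ∧
  (∀ a : Fin l, (a : ℕ) = l - 1 → (σ a : ℕ) = 0)

/-- The conditions on `n = (n_1,…,n_{l-1})`: `n_i ≥ 0` for `i ≤ l-2`,
`n_{l-1} ≥ 2 - σ(l-1)`, `n_i > 0` whenever `σ(i) < σ(i+1)`; the unused entries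
are normalized to `0`. -/
def NCond (l : ℕ) (σ : Equiv.Perm (Fin l)) (n : ℕ → ℤ) : Prop :=
  (∀ i, 1 ≤ i → i ≤ l - 2 → 0 ≤ n i) ∧
  (∀ a : Fin l, (a : ℕ) = l - 2 → (2 : ℤ) - (((σ a : ℕ) : ℤ) + 1) ≤ n (l - 1)) ∧
  (∀ i, 1 ≤ i → i ≤ l - 1 → ∀ a b : Fin l, (a : ℕ) = i - 1 → (b : ℕ) = i →
      (σ a : ℕ) < (σ b : ℕ) → 0 < n i) ∧
  (∀ i, i = 0 ∨ l - 1 < i → n i = 0)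

end

/-! Splitting off the first entry `x_0 = i` of a configuration leaves `(x_1, x_2, …)`, a
configuration for the boundary vector `shiftB k l b i`: the
first window `x_0 + ⋯ + x_{l-1} ≤ k` becomes its last boundary condition. Since
`Σ j x_j = Σ j x_{j+1} + Σ x_{j+1}`, this is the difference equation at the level of
coefficients, and the coefficients of `χ^{(N)}` stop depending on `N` once `N` exceeds the
`q`-degree. Conversely, the difference equation expresses the coefficient of `q^a z^m`,
`m > 0`, through coefficients of total degree `a < a + m`, which together with the initial
condition determines the family. -/

lemma sum_range_eq_sum_range_of_eq_zero {M : Type*} [AddCommMonoid M] {f : ℕ → M} {n n' : ℕ}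
    (hf : ∀ j, n ≤ j → f j = 0) (hf' : ∀ j, n' ≤ j → f j = 0) :
    ∑ j ∈ range n, f j = ∑ j ∈ range n', f j := by
  wlog h : n ≤ n' generalizing n n'
  · exact (this hf' hf (by omega)).symm
  exact sum_subset (range_subset_range.2 h) fun j _ hj => hf j (by simpa using hj)

lemma eq_zero_of_sum_range_mul_eq {x : ℕ → ℕ} {N a j : ℕ}
    (h : ∑ t ∈ range N, t * x t = a) (hj : a < j) (hjN : j < N) : x j = 0 := by
  by_contra hne
  have := single_le_sum (f := fun t => t * x t) (fun _ _ => Nat.zero_le _) (mem_range.2 hjN)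
  have := Nat.le_mul_of_pos_right j (Nat.pos_of_ne_zero hne)
  omega

lemma sum_range_succ_mul_eq (x : ℕ → ℕ) (n : ℕ) :
    ∑ t ∈ range (n + 1), t * x t = ∑ t ∈ range n, t * x (t + 1) + ∑ t ∈ range n, x (t + 1) := by
  rw [sum_range_succ', ← sum_add_distrib]
  simp [add_mul]

lemma Nat.card_eq_sum_card_fiber {α : Type*} {P : α → Prop} [Finite {a // P a}] (f : α → ℕ)
    {B : ℕ} (hB : ∀ a, P a → f a < B) :
    Nat.card {a // P a} = ∑ i ∈ range B, Nat.card {a // P a ∧ f a = i} := by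
  let fiber := Equiv.sigmaFiberEquiv fun a : {a // P a} => (⟨f a, hB a a.2⟩ : Fin B)
  rw [← Fin.sum_univ_eq_sum_range (fun i => Nat.card {a // P a ∧ f a = i}),
    ← Nat.card_eq_of_bijective _ fiber.bijective, Nat.card_sigma]
  refine sum_congr rfl fun i _ => Nat.card_congr ?_
  exact (Equiv.subtypeEquivRight fun a => by simp [Fin.ext_iff]).trans
    (Equiv.subtypeSubtypeEquivSubtypeInter P fun a => f a = i)

def seqCons (i : ℕ) (x : ℕ → ℕ) : ℕ → ℕ
  | 0 => i
  | j + 1 => x j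

lemma seqCons_tail {x : ℕ → ℕ} {i : ℕ} (h : x 0 = i) : seqCons i (fun j => x (j + 1)) = x :=
  funext fun j => by cases j; exacts [h.symm, rfl]

lemma Nat.card_and_head_eq_card_seqCons (P : (ℕ → ℕ) → Prop) (i : ℕ) :
    Nat.card {x // P x ∧ x 0 = i} = Nat.card {x // P (seqCons i x)} :=
  Nat.card_congr
    { toFun := fun x => ⟨fun j => x.1 (j + 1), by rw [seqCons_tail x.2.2]; exact x.2.1⟩
      invFun := fun x => ⟨seqCons i x.1, x.2, rfl⟩
      left_inv := fun x => Subtype.ext (seqCons_tail x.2.2)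
      right_inv := fun _ => rfl }

def IsConfig (k l : ℕ) (b : ℕ → ℕ) (N a m : ℕ) (x : ℕ → ℕ) : Prop :=
  windowOK k l x ∧ boundOK l b x ∧ (∀ i, N ≤ i → x i = 0) ∧
    ∑ j ∈ range N, j * x j = a ∧ ∑ j ∈ range N, x j = m

noncomputable def numConfigs (k l : ℕ) (b : ℕ → ℕ) (N a m : ℕ) : ℕ :=
  Nat.card {x // IsConfig k l b N a m x}

lemma coeff_chiN (k l N : ℕ) (b : ℕ → ℕ) (e : Fin 2 →₀ ℕ) :
    coeff e (chiN k l N b) = numConfigs k l b N (e 0) (e 1) := rfl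

lemma coeff_chiInf (k l : ℕ) (b : ℕ → ℕ) (e : Fin 2 →₀ ℕ) :
    coeff e (chiInf k l b) = numConfigs k l b (e 0 + 1) (e 0) (e 1) := rfl

section Configurations

variable {k l : ℕ} {b : ℕ → ℕ} {N a m : ℕ} {x : ℕ → ℕ}

lemma IsConfig.eq_zero (h : IsConfig k l b N a m x) {j : ℕ} (hj : a < j) : x j = 0 := by
  obtain ⟨-, -, hs, hw, -⟩ := h
  by_cases hjN : j < N
  · exact eq_zero_of_sum_range_mul_eq hw hj hjN
  · exact hs j (not_lt.1 hjN)

lemma IsConfig.of_le {N' : ℕ} (h : IsConfig k l b N a m x) (hN' : a + 1 ≤ N') :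
    IsConfig k l b N' a m x := by
  have hs' : ∀ j, N' ≤ j → x j = 0 := fun j hj => h.eq_zero (by omega)
  obtain ⟨hw, hb, hs, ha, hm⟩ := h
  refine ⟨hw, hb, hs', ?_, ?_⟩
  · rw [← ha]
    exact sum_range_eq_sum_range_of_eq_zero (by simp +contextual [hs']) (by simp +contextual [hs])
  · rw [← hm]
    exact sum_range_eq_sum_range_of_eq_zero (by simp +contextual [hs']) (by simp +contextual [hs])

lemma numConfigs_eq_of_le (hN : a + 1 ≤ N) :
    numConfigs k l b N a m = numConfigs k l b (a + 1) a m :=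
  Nat.card_congr <| Equiv.subtypeEquivRight fun _ => ⟨fun h => h.of_le le_rfl, fun h => h.of_le hN⟩

instance : Finite {x // IsConfig k l b N a m x} := by
  have hle : ∀ (x : {x // IsConfig k l b N a m x}) (j : Fin N), x.1 j < m + 1 := fun x j => by
    have := single_le_sum (f := x.1) (fun _ _ => Nat.zero_le _) (mem_range.2 j.2)
    have := x.2.2.2.2.2
    omega
  refine Finite.of_injective (fun x (j : Fin N) => (⟨x.1 j, hle x j⟩ : Fin (m + 1))) fun x y h => ?_
  refine Subtype.ext (funext fun j => ?_)
  by_cases hj : j < N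
  · simpa using congrFun h ⟨j, hj⟩
  · rw [x.2.2.2.1 j (not_lt.1 hj), y.2.2.2.1 j (not_lt.1 hj)]

lemma isConfig_zero_iff : IsConfig k l b (a + 1) a 0 x ↔ x = 0 ∧ a = 0 := by
  constructor
  · rintro ⟨-, -, hs, ha, hm⟩
    have hx : x = 0 := funext fun j => by
      by_cases hj : j < a + 1
      · exact (sum_eq_zero_iff.1 hm) j (mem_range.2 hj)
      · exact hs j (not_lt.1 hj)
    subst hx
    simpa [eq_comm] using ha
  · rintro ⟨rfl, rfl⟩
    exact ⟨fun _ => by simp, fun _ _ => by simp, fun _ _ => rfl, by simp, by simp⟩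

lemma numConfigs_charge_zero (a : ℕ) :
    numConfigs k l b (a + 1) a 0 = if a = 0 then 1 else 0 := by
  rw [numConfigs, Nat.card_congr (Equiv.subtypeEquivRight fun _ => isConfig_zero_iff)]
  split_ifs with ha <;> simp [ha]

end Configurations

lemma windowOK_iff_tail {k l : ℕ} {x : ℕ → ℕ} :
    windowOK k l x ↔ ∑ t ∈ range l, x t ≤ k ∧ windowOK k l (fun j => x (j + 1)) := by
  simp only [windowOK, add_right_comm _ _ 1]
  constructor
  · intro h
    exact ⟨by simpa using h 0, fun j => h (j + 1)⟩
  · rintro ⟨h0, h⟩ (_ | j)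
    · simpa using h0
    · exact h j

section Shift

variable {k l : ℕ} {b : ℕ → ℕ}

lemma admB_shiftB (hb : AdmB k l b) (i : ℕ) :
    AdmB k l (shiftB k l b i) := by
  obtain ⟨hmono, hk⟩ := hb
  refine ⟨fun i' j' hij hj => ?_, fun j hj => ?_⟩
  · simp only [shiftB]
    split_ifs with h₁ h₂ h₂
    · exact Nat.sub_le_sub_right (hmono _ _ (by omega) (by omega)) i
    · exact Nat.sub_le_sub_right (hk _ (by omega)) i
    · omega
    · exact le_rfl
  · simp only [shiftB]
    split_ifs
    · exact (Nat.sub_le _ _).trans (hk _ (by omega))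
    · exact Nat.sub_le _ _

lemma boundOK_shiftB_iff (hl : 2 ≤ l) (hb : AdmB k l b) {x : ℕ → ℕ} (hx : x 0 ≤ b 0) :
    boundOK l (shiftB k l b (x 0)) (fun j => x (j + 1)) ↔
      ∑ t ∈ range l, x t ≤ k ∧ boundOK l b x := by
  have hsplit : ∀ n, ∑ t ∈ range (n + 1), x t = ∑ t ∈ range n, x (t + 1) + x 0 :=
    fun n => sum_range_succ' x n
  have hxb : ∀ j, j < l - 1 → x 0 ≤ b j := fun j hj => hx.trans (hb.1 0 j (Nat.zero_le _) hj)
  have hxk : x 0 ≤ k := hx.trans (hb.2 0 (by omega))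
  obtain ⟨n, rfl⟩ : ∃ n, l = n + 2 := ⟨l - 2, by omega⟩
  simp only [boundOK, shiftB, Nat.add_sub_cancel, show n + 2 - 1 = n + 1 by omega] at hxb ⊢
  constructor
  · intro h
    refine ⟨?_, ?_⟩
    · have := h n (by omega)
      rw [if_neg (by omega)] at this
      rw [hsplit (n + 1)]
      omega
    · rintro (_ | j) hj
      · simpa using hx
      · have := h j (by omega)
        rw [if_pos (by omega)] at this
        have := hxb (j + 1) hj
        rw [hsplit (j + 1)]
        omega
  · rintro ⟨hk, h⟩ j hj
    split_ifs with hjn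
    · have := h (j + 1) (by omega)
      rw [hsplit (j + 1)] at this
      omega
    · obtain rfl : n = j := by omega
      rw [hsplit (n + 1)] at hk
      omega

lemma isConfig_succ_iff (hl : 2 ≤ l) (hb : AdmB k l b) {N a m : ℕ} {x : ℕ → ℕ} :
    IsConfig k l b (N + 1) a m x ↔ x 0 ≤ b 0 ∧ x 0 ≤ m ∧ m - x 0 ≤ a ∧
      IsConfig k l (shiftB k l b (x 0)) N (a - (m - x 0)) (m - x 0) (fun j => x (j + 1)) := by
  have hweight := sum_range_succ_mul_eq x N
  have hcharge : ∑ t ∈ range (N + 1), x t = ∑ t ∈ range N, x (t + 1) + x 0 :=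
    sum_range_succ' x N
  constructor
  · rintro ⟨hw, hbd, hs, ha, hm⟩
    have hx : x 0 ≤ b 0 := by simpa using hbd 0 (by omega)
    rw [windowOK_iff_tail] at hw
    refine ⟨hx, by omega, by omega, hw.2, (boundOK_shiftB_iff hl hb hx).2 ⟨hw.1, hbd⟩,
      fun j hj => hs (j + 1) (by omega), ?_, ?_⟩ <;> beta_reduce <;> omega
  · rintro ⟨hx, hxm, hma, hw, hbd, hs, ha, hm⟩
    beta_reduce at ha hm
    obtain ⟨hw₀, hbd⟩ := (boundOK_shiftB_iff hl hb hx).1 hbd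
    refine ⟨windowOK_iff_tail.2 ⟨hw₀, hw⟩, hbd, ?_, by omega, by omega⟩
    rintro (_ | j) hj
    · omega
    · exact hs j (by omega)

lemma numConfigs_rec (hl : 2 ≤ l) (hb : AdmB k l b) (a m : ℕ) :
    numConfigs k l b (a + 1) a m = ∑ i ∈ range (b 0 + 1),
      if i ≤ m ∧ m - i ≤ a then
        numConfigs k l (shiftB k l b i) (a - (m - i) + 1) (a - (m - i)) (m - i)
      else 0 := by
  -- at length `a + 2` the tails have length `a + 1`, enough for every weight `≤ a`
  rw [← numConfigs_eq_of_le (N := a + 1 + 1) (by omega), numConfigs,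
    Nat.card_eq_sum_card_fiber (fun x => x 0) fun x hx => ?_]
  · refine sum_congr rfl fun i hi => ?_
    rw [Nat.card_and_head_eq_card_seqCons]
    simp only [isConfig_succ_iff hl hb, seqCons, Nat.lt_succ_iff.1 (mem_range.1 hi), true_and]
    split_ifs with h
    · rw [← numConfigs_eq_of_le (N := a + 1) (by omega), numConfigs]
      simp only [h, true_and]
    · exact Nat.card_eq_zero.2 (.inl ⟨fun x => h ⟨x.2.1, x.2.2.1⟩⟩)
  · simpa [Nat.lt_succ_iff] using hx.2.1 0 (by omega)

end Shift

@[simp] lemma idx2_apply_zero (a c : ℕ) : idx2 a c 0 = a := by simp [idx2]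

@[simp] lemma idx2_apply_one (a c : ℕ) : idx2 a c 1 = c := by simp [idx2]

lemma idx2_eta (e : Fin 2 →₀ ℕ) : idx2 (e 0) (e 1) = e := by
  ext t
  fin_cases t <;> simp

lemma coeff_Sop (f : PS) (e : Fin 2 →₀ ℕ) :
    coeff e (Sop f) = if e 1 ≤ e 0 then coeff (idx2 (e 0 - e 1) (e 1)) f else 0 := rfl

lemma coeff_Zv_pow_mul_Sop (g : PS) (i a m : ℕ) :
    coeff (idx2 a m) (Zv ^ i * Sop g) =
      if i ≤ m ∧ m - i ≤ a then coeff (idx2 (a - (m - i)) (m - i)) g else 0 := by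
  rw [Zv, X_pow_eq, coeff_monomial_mul]
  by_cases him : i ≤ m
  · have hsub : idx2 a m - Finsupp.single 1 i = idx2 a (m - i) := by
      ext t
      fin_cases t <;> simp [idx2]
    rw [if_pos (by simpa [Finsupp.single_le_iff] using him), one_mul, hsub, coeff_Sop,
      idx2_apply_zero, idx2_apply_one]
    simp only [him, true_and]
  · rw [if_neg (by simpa [Finsupp.single_le_iff] using him), if_neg (by tauto)]

def SolvesDifferenceEqs (k l : ℕ) (F : (ℕ → ℕ) → PS) : Prop :=
  (∀ b, AdmB k l b → F b = ∑ i ∈ range (b 0 + 1), Zv ^ i * Sop (F (shiftB k l b i))) ∧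
    ∀ b, AdmB k l b → ∀ e : Fin 2 →₀ ℕ, e 1 = 0 → coeff e (F b) = if e = 0 then 1 else 0

section DifferenceEqs

variable {k l : ℕ} {F G : (ℕ → ℕ) → PS}

lemma solvesDifferenceEqs_chiInf (hl : 2 ≤ l) : SolvesDifferenceEqs k l (chiInf k l) := by
  refine ⟨fun b hb => ext fun e => ?_, fun b _ e he => ?_⟩
  · rw [← idx2_eta e, coeff_chiInf, map_sum]
    simp only [coeff_Zv_pow_mul_Sop, coeff_chiInf, idx2_apply_zero, idx2_apply_one,
      numConfigs_rec hl hb, Nat.cast_sum, Nat.cast_ite, Nat.cast_zero]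
  · have he' : e = 0 ↔ e 0 = 0 := by
      rw [← idx2_eta e, he]
      simp [idx2]
    rw [coeff_chiInf, he, numConfigs_charge_zero]
    split_ifs <;> simp_all

lemma SolvesDifferenceEqs.congr (hF : SolvesDifferenceEqs k l F)
    (hG : ∀ b, AdmB k l b → G b = F b) : SolvesDifferenceEqs k l G := by
  refine ⟨fun b hb => ?_, fun b hb => hG b hb ▸ hF.2 b hb⟩
  rw [hG b hb, hF.1 b hb]
  exact sum_congr rfl fun i _ => by rw [hG _ (admB_shiftB hb i)]

lemma SolvesDifferenceEqs.eq (hF : SolvesDifferenceEqs k l F) (hG : SolvesDifferenceEqs k l G)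
    {b : ℕ → ℕ} (hb : AdmB k l b) : F b = G b := by
  suffices h : ∀ n a m b, a + m = n → AdmB k l b →
      coeff (idx2 a m) (F b) = coeff (idx2 a m) (G b) by
    ext e
    rw [← idx2_eta e]
    exact h _ _ _ b rfl hb
  intro n
  induction n using Nat.strong_induction_on with | _ n ih => ?_
  rintro a m b rfl hb
  rcases Nat.eq_zero_or_pos m with rfl | hm
  · rw [hF.2 b hb _ (idx2_apply_one a 0), hG.2 b hb _ (idx2_apply_one a 0)]
  rw [hF.1 b hb, hG.1 b hb, map_sum, map_sum]
  refine sum_congr rfl fun i _ => ?_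
  simp only [coeff_Zv_pow_mul_Sop]
  split_ifs with h
  · exact ih _ (by omega) _ _ _ rfl (admB_shiftB hb i)
  · rfl

end DifferenceEqs

lemma tendsto_coeff_chiN (k l : ℕ) (b : ℕ → ℕ) (e : Fin 2 →₀ ℕ) :
    Tendsto (fun N => coeff e (chiN k l N b)) atTop (nhds (coeff e (chiInf k l b))) :=
  tendsto_atTop_of_eventually_const (i₀ := e 0 + 1) fun N hN => by
    rw [coeff_chiN, coeff_chiInf, numConfigs_eq_of_le hN]

theorem stmt4_general (k l : ℕ) (hl : 2 ≤ l) :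
    (∀ b, AdmB k l b → ∀ e : Fin 2 →₀ ℕ,
      Filter.Tendsto (fun N => MvPowerSeries.coeff e (chiN k l N b)) Filter.atTop
        (nhds (MvPowerSeries.coeff e (chiInf k l b)))) ∧
    ∀ F : (ℕ → ℕ) → PS,
      (((∀ b, AdmB k l b →
            F b = ∑ i ∈ Finset.range (b 0 + 1), Zv ^ i * Sop (F (shiftB k l b i))) ∧
        (∀ b, AdmB k l b → ∀ e : Fin 2 →₀ ℕ, e 1 = 0 →
            MvPowerSeries.coeff e (F b) = if e = 0 then 1 else 0)) ↔
      (∀ b, AdmB k l b → F b = chiInf k l b)) :=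
  ⟨fun b _ e => tendsto_coeff_chiN k l b e, fun _ =>
    ⟨fun hF _ hb => SolvesDifferenceEqs.eq hF (solvesDifferenceEqs_chiInf hl) hb,
      (solvesDifferenceEqs_chiInf hl).congr⟩⟩

/-- The limits `χ^{(∞)}_{k,l;b}(q,z) = lim_{N→∞} χ^{(N)}_{k,l;b}(q,z)` exist
(coefficientwise) as formal power series, and `(χ^{(∞)}_{k,l;b})_b` is the unique
family of formal power series satisfying the difference equations
`χ^{(∞)}_{k,l;(b_0,…,b_{l-2})}(q,z) = Σ_{i=0}^{b_0} z^i χ^{(∞)}_{k,l;(b_1-i,…,b_{l-2}-i,k-i)}(q,qz)`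
together with the initial condition `χ^{(∞)}_{k,l;b}(q,0) = 1`. -/
theorem stmt4 (k l : ℕ) (hk : 0 < k) (hl : 2 ≤ l) :
    (∀ b, AdmB k l b → ∀ e : Fin 2 →₀ ℕ,
      Filter.Tendsto (fun N => MvPowerSeries.coeff e (chiN k l N b)) Filter.atTop
        (nhds (MvPowerSeries.coeff e (chiInf k l b)))) ∧
    ∀ F : (ℕ → ℕ) → PS,
      (((∀ b, AdmB k l b →
            F b = ∑ i ∈ Finset.range (b 0 + 1), Zv ^ i * Sop (F (shiftB k l b i))) ∧
        (∀ b, AdmB k l b → ∀ e : Fin 2 →₀ ℕ, e 1 = 0 →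
            MvPowerSeries.coeff e (F b) = if e = 0 then 1 else 0)) ↔
      (∀ b, AdmB k l b → F b = chiInf k l b)) :=
  stmt4_general k l hl
end

section
/- Let M = C_1 ··· C_N be a good monomial in the letters A, B, and suppose C_i = B. Then M_{c_1} ∘ ··· ∘ M_{c_{i-1}}(ι_{2,1}) ≠ 0 in Λ, where c_j = a if C_j = A and c_j = b if C_j = B. -/
/-!
Write `ι_{x,y} = b_{x-2} - b_{y-2} + δ(x ≤ y) k` for residues `x, y ∈ {1, …, l}`. Since `M_a`, `M_b`
are additive, their values on the generators give `M_b ι_{i,j} = ι_{i+1,j+1}` and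
`M_a ι_{i,j} = ι_{i',j'}`, where an index is raised by one unless its residue is `1`; the single
exception is `M_a ι_{1,l} = 0`. Hence a word sends `ι_{i,1}` to some `ι_{i',j'}`, which is never
zero, as long as no `A` meets the second index at residue `l`. Follow that index from `1` while
the word is applied from the right: its residue `y ≥ 2` certifies that the letter `y - 2` places
after the one just applied is a `B`. An `A` applied at residue `l` would thus be followed `l - 1`
places later by a `B`, which the good monomial `C_1 ⋯ C_i` with `C_i = B` does not allow.
-/

open Finset Filter MvPowerSeries

section IotaVectors

variable {l : ℕ}

lemma one_le_ibar (l : ℕ) (i : ℤ) : 1 ≤ ibar l i := Nat.le_add_left 1 _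

lemma ibar_le (hl : 0 < l) (i : ℤ) : ibar l i ≤ l := by
  have := Int.emod_lt_of_pos (i - 1) (Int.natCast_pos.mpr hl)
  have := Int.emod_nonneg (i - 1) (Int.natCast_ne_zero.mpr hl.ne')
  unfold ibar; omega

lemma ibar_one (l : ℕ) : ibar l 1 = 1 := by simp [ibar]

lemma ibar_add_one (hl : 0 < l) (i : ℤ) :
    ibar l (i + 1) = if ibar l i = l then 1 else ibar l i + 1 := by
  have hl' : (0 : ℤ) < l := Int.natCast_pos.mpr hl
  have h0 := Int.emod_nonneg (i - 1) hl'.ne'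
  have h1 := Int.emod_lt_of_pos (i - 1) hl'
  have key : i % l = ((i - 1) % l + 1) % l := by rw [Int.emod_add_emod, sub_add_cancel]
  unfold ibar
  rw [add_sub_cancel_right, key]
  split_ifs with h
  · rw [show (i - 1) % l + 1 = l by omega, Int.emod_self]; rfl
  · rw [Int.emod_eq_of_lt (by omega) (by omega)]; omega

lemma iotaL_ne_zero (hl : 0 < l) (i j : ℤ) : iotaL l i j ≠ 0 := by
  have := ibar_le hl i; have := one_le_ibar l i
  have := ibar_le hl j; have := one_le_ibar l j
  intro h
  have coord := fun t => congrFun h t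
  simp only [iotaL, Pi.zero_apply] at coord
  rcases lt_trichotomy (ibar l i) (ibar l j) with hij | hij | hij
  · have := coord (ibar l j - 2); split_ifs at this <;> omega
  · have := coord (l - 1); split_ifs at this <;> omega
  · have := coord (ibar l i - 2); split_ifs at this <;> omega

/-- The generator `b_{x-2}` of `Λ`, with `b_{-1} = 0`. -/
def bgen (x : ℕ) : ℕ → ℤ := if 2 ≤ x then Pi.single (x - 2) 1 else 0

def kgen (l : ℕ) : ℕ → ℤ := Pi.single (l - 1) 1

lemma bgen_apply (x t : ℕ) : bgen x t = if 2 ≤ x ∧ t = x - 2 then 1 else 0 := by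
  unfold bgen; split_ifs <;> simp_all

lemma kgen_apply (l t : ℕ) : kgen l t = if t = l - 1 then 1 else 0 := Pi.single_apply ..

lemma iotaL_eq (l : ℕ) (i j : ℤ) :
    iotaL l i j = bgen (ibar l i) - bgen (ibar l j) + if ibar l i ≤ ibar l j then kgen l else 0 := by
  funext t
  simp only [iotaL, Pi.add_apply, Pi.sub_apply, bgen_apply, ite_apply, kgen_apply, Pi.zero_apply]
  split_ifs <;> omega

lemma Ma_zero (l : ℕ) : Ma l 0 = 0 := by
  funext j; simp only [Ma, Pi.zero_apply]; split_ifs <;> rfl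

lemma Ma_add (l : ℕ) (u v : ℕ → ℤ) : Ma l (u + v) = Ma l u + Ma l v := by
  funext j; simp only [Ma, Pi.add_apply]; split_ifs <;> ring

lemma Ma_sub (l : ℕ) (u v : ℕ → ℤ) : Ma l (u - v) = Ma l u - Ma l v := by
  funext j; simp only [Ma, Pi.sub_apply]; split_ifs <;> ring

lemma Mb_zero (l : ℕ) : Mb l 0 = 0 := by
  funext j; simp [Mb]

lemma Mb_add (l : ℕ) (u v : ℕ → ℤ) : Mb l (u + v) = Mb l u + Mb l v := by
  funext j; simp only [Mb, Pi.add_apply, sum_add_distrib]; split_ifs <;> ring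

lemma Mb_sub (l : ℕ) (u v : ℕ → ℤ) : Mb l (u - v) = Mb l u - Mb l v := by
  funext j; simp only [Mb, Pi.sub_apply, sum_sub_distrib]; split_ifs <;> ring

lemma Ma_kgen (hl : 2 ≤ l) : Ma l (kgen l) = kgen l := by
  funext j; simp only [Ma, kgen_apply]; split_ifs <;> omega

lemma Mb_kgen (hl : 2 ≤ l) : Mb l (kgen l) = kgen l := by
  funext j; simp only [Mb, kgen, Pi.single_apply]; split_ifs <;> simp_all <;> omega

lemma Ma_bgen {x : ℕ} (hl : 2 ≤ l) (hx : x ≤ l) :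
    Ma l (bgen x) = bgen (if x = 1 ∨ x = l then 1 else x + 1) + if x = l then kgen l else 0 := by
  funext t
  simp only [Ma, Pi.add_apply, bgen_apply, ite_apply, kgen_apply, Pi.zero_apply]
  split_ifs <;> omega

lemma sum_range_bgen {x : ℕ} (hx : x ≤ l) :
    ∑ t ∈ range (l - 1), bgen x t = if 2 ≤ x then 1 else 0 := by
  unfold bgen; split_ifs <;> simp; omega

lemma Mb_bgen {x : ℕ} (hl : 2 ≤ l) (hx1 : 1 ≤ x) (hx : x ≤ l) :
    Mb l (bgen x) = bgen (if x = l then 1 else x + 1) - bgen 2 + if x = l then kgen l else 0 := by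
  funext t
  simp only [Mb]
  rw [sum_range_bgen hx]
  simp only [Pi.add_apply, Pi.sub_apply, bgen_apply, ite_apply, kgen_apply, Pi.zero_apply]
  split_ifs <;> omega

def idxStep (l : ℕ) (c : Bool) (i : ℤ) : ℤ := if c = true ∧ ibar l i = 1 then i else i + 1

lemma ibar_idxStep (hl : 0 < l) (c : Bool) (i : ℤ) :
    ibar l (idxStep l c i) = if c = true ∧ ibar l i = 1 ∨ ibar l i = l then 1 else ibar l i + 1 := by
  unfold idxStep
  by_cases hc : c = true ∧ ibar l i = 1
  · simp [hc]
  · rw [if_neg hc, ibar_add_one hl]; simp only [hc, false_or]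

lemma Mb_iotaL (hl : 2 ≤ l) (i j : ℤ) : Mb l (iotaL l i j) = iotaL l (i + 1) (j + 1) := by
  have hl0 : 0 < l := by omega
  have hi1 := one_le_ibar l i; have hi := ibar_le hl0 i
  have hj1 := one_le_ibar l j; have hj := ibar_le hl0 j
  rw [iotaL_eq, iotaL_eq, ibar_add_one hl0, ibar_add_one hl0, Mb_add, Mb_sub, Mb_bgen hl hi1 hi,
    Mb_bgen hl hj1 hj, apply_ite (Mb l), Mb_kgen hl, Mb_zero]
  split_ifs <;> first | omega | abel

lemma Ma_iotaL (hl : 2 ≤ l) (i j : ℤ) (h : ibar l i = 1 → ibar l j ≠ l) :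
    Ma l (iotaL l i j) = iotaL l (idxStep l true i) (idxStep l true j) := by
  have hl0 : 0 < l := by omega
  have hi1 := one_le_ibar l i; have hi := ibar_le hl0 i
  have hj1 := one_le_ibar l j; have hj := ibar_le hl0 j
  rw [iotaL_eq, iotaL_eq, ibar_idxStep hl0, ibar_idxStep hl0, Ma_add, Ma_sub, Ma_bgen hl hi,
    Ma_bgen hl hj, apply_ite (Ma l), Ma_kgen hl, Ma_zero]
  simp only [true_and]
  split_ifs <;> first | omega | abel

end IotaVectors

section Words

variable {l : ℕ}

lemma GoodWord.of_cons {c : Bool} {u : List Bool} (h : GoodWord l (c :: u)) : GoodWord l u := by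
  intro i hi hA
  have := h (i + 1) (by simp only [List.length_cons]; omega) hA
  rwa [show i + 1 + (l - 1) = i + (l - 1) + 1 by omega, List.getD_cons_succ] at this

lemma GoodWord.take {w : List Bool} (h : GoodWord l w) (n : ℕ) : GoodWord l (w.take n) := by
  intro i hi hA
  simp only [List.length_take] at hi
  simp only [List.getD_eq_getElem?_getD, List.getElem?_take] at hA ⊢
  rw [if_pos (by omega)] at hA ⊢
  exact h i (by omega) hA

lemma take_succ_of_getD_eq_false {w : List Bool} {i : ℕ} (h : w.getD i true = false) :
    w.take (i + 1) = w.take i ++ [false] := by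
  rw [List.getD_eq_getElem?_getD] at h
  rw [List.take_add_one]
  cases hi : w[i]? <;> simp_all

def wordIdx (l : ℕ) (u : List Bool) (i : ℤ) : ℤ := u.foldr (idxStep l) i

lemma wordIdx_cons (c : Bool) (u : List Bool) (i : ℤ) :
    wordIdx l (c :: u) i = idxStep l c (wordIdx l u i) := rfl

lemma getD_wordIdx_one (hl : 0 < l) (u : List Bool) (h : 2 ≤ ibar l (wordIdx l u 1)) :
    u.getD (ibar l (wordIdx l u 1) - 2) true = false := by
  induction u with
  | nil => simp [wordIdx, ibar_one] at h
  | cons c u ih =>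
    rw [wordIdx_cons, ibar_idxStep hl] at h ⊢
    split_ifs at h ⊢ with hc
    · omega
    · rcases Nat.lt_or_ge (ibar l (wordIdx l u 1)) 2 with h1 | h2
      · have hc : c = false := Bool.eq_false_iff.mpr fun hA => hc (Or.inl ⟨hA, by omega⟩)
        rw [show ibar l (wordIdx l u 1) + 1 - 2 = 0 by omega, List.getD_cons_zero, hc]
      · rw [show ibar l (wordIdx l u 1) + 1 - 2 = ibar l (wordIdx l u 1) - 2 + 1 by omega,
          List.getD_cons_succ]
        exact ih h2

lemma ibar_wordIdx_one_ne (hl : 2 ≤ l) (u : List Bool) (hu : GoodWord l (true :: (u ++ [false]))) :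
    ibar l (wordIdx l u 1) ≠ l := by
  intro h
  have hB := getD_wordIdx_one (show 0 < l by omega) u (by omega)
  rw [h] at hB
  have hlen : l - 2 < u.length := by
    by_contra hlen
    rw [List.getD_eq_default _ _ (by omega)] at hB
    exact Bool.noConfusion hB
  have := hu 0 (by simp only [List.length_cons, List.length_append]; omega) rfl
  rw [show 0 + (l - 1) = l - 2 + 1 by omega, List.getD_cons_succ, List.getD_append _ _ _ _ hlen,
    hB] at this
  exact Bool.noConfusion this

lemma applyWord_iotaL (hl : 2 ≤ l) (u : List Bool) (hu : GoodWord l (u ++ [false])) (i : ℤ) :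
    applyWord l u (iotaL l i 1) = iotaL l (wordIdx l u i) (wordIdx l u 1) := by
  induction u with
  | nil => rfl
  | cons c u ih =>
    have ih := ih hu.of_cons
    cases c
    · exact (congrArg (Mb l) ih).trans (Mb_iotaL hl _ _)
    · exact (congrArg (Ma l) ih).trans (Ma_iotaL hl _ _ fun _ => ibar_wordIdx_one_ne hl u hu)

end Words

theorem stmt10_general (l : ℕ) (hl : 2 ≤ l) (w : List Bool) (hw : GoodWord l w)
    (i : ℕ) (hB : w.getD i true = false) :
    applyWord l (w.take i) (iotaL l 2 1) ≠ 0 := by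
  have hgood : GoodWord l (w.take i ++ [false]) :=
    take_succ_of_getD_eq_false hB ▸ hw.take (i + 1)
  rw [applyWord_iotaL hl _ hgood]
  exact iotaL_ne_zero (by omega) _ _

/-- If `M = C_1 ⋯ C_N` is a good monomial and `C_i = B`, then
`M_{c_1} ∘ ⋯ ∘ M_{c_{i-1}}(ι_{2,1}) ≠ 0` in `Λ`
(letters are 0-indexed: the hypothesis is about the letter at position `i`). -/
theorem stmt10 (l : ℕ) (hl : 2 ≤ l) (w : List Bool) (hw : GoodWord l w)
    (i : ℕ) (hi : i < w.length) (hB : w.getD i true = false) :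
    applyWord l (w.take i) (iotaL l 2 1) ≠ 0 :=
  stmt10_general l hl w hw i hB
end
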